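/- Let Γ be a ℤ^d-periodic graph with an n-vertex fundamental domain W, and suppose the generic Newton polytope N = N(D(z,λ)) of Γ is a vertical segment. If there exists U ⊂ W with |U| = |W| − 1 such that U is a fundamental domain of support 0 of the induced periodic graph Γ_U, then Γ has a fundamental domain of support 0. -/

import Mathlib

open scoped Classical Polynomial

noncomputable section

/-- A `ℤ^d`-periodic graph (with no self-loops or multiple edges), given by a
fundamental domain `[n] = Fin n` together with, for each pair `i j` of vertices
of the fundamental domain, the finite set `edges i j ⊆ ℤ^d` of those `a` such
that there is an edge between the vertex `(i,0)` and the vertex `(j,a)`.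
The full vertex set is `Fin n × ℤ^d`, with `ℤ^d` acting by translation on the
second coordinate. -/
structure PeriodicGraph (d n : ℕ) where
  edges : Fin n → Fin n → Finset (Fin d → ℤ)
  symm : ∀ i j a, a ∈ edges i j ↔ -a ∈ edges j i
  no_loop : ∀ i, (0 : Fin d → ℤ) ∉ edges i i

namespace PeriodicGraph

variable {d n : ℕ}

/-- Vertices of the periodic graph: pairs `(i, a)` with `i` in the fundamental
domain and `a ∈ ℤ^d`. -/
abbrev Vertex (d n : ℕ) := Fin n × (Fin d → ℤ)

/-- Adjacency in the full `ℤ^d`-periodic graph. -/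
def Adj (G : PeriodicGraph d n) (u v : Vertex d n) : Prop :=
  (v.2 - u.2) ∈ G.edges u.1 v.1

/-- The periodic graph is connected. -/
def Connected (G : PeriodicGraph d n) : Prop :=
  ∀ u v : Vertex d n, Relation.ReflTransGen G.Adj u v

/-- Directed edges (up to translation): triples `(i, j, a)` so that there is an
edge from `(i,0)` to `(j,a)`. -/
def DirEdge (G : PeriodicGraph d n) : Type :=
  {x : Fin n × Fin n × (Fin d → ℤ) // x.2.2 ∈ G.edges x.1 x.2.1}

/-- Reversal of a directed edge. -/
def flipEdge (G : PeriodicGraph d n) (x : G.DirEdge) : G.DirEdge :=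
  ⟨(x.1.2.1, x.1.1, -x.1.2.2), (G.symm _ _ _).mp x.2⟩

lemma flipEdge_flipEdge (G : PeriodicGraph d n) (x : G.DirEdge) :
    G.flipEdge (G.flipEdge x) = x := by
  obtain ⟨⟨i, j, a⟩, hx⟩ := x
  simp [flipEdge]
  rfl

/-- The setoid identifying a directed edge with its reversal; an (undirected)
edge label variable `e_{(i,j),a} = e_{(j,i),-a}` corresponds to an equivalence
class. -/
def edgeSetoid (G : PeriodicGraph d n) : Setoid G.DirEdge where
  r x y := y = x ∨ y = G.flipEdge x
  iseqv := by
    constructor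
    · intro x; exact Or.inl rfl
    · rintro x y (rfl | rfl)
      · exact Or.inl rfl
      · right; rw [flipEdge_flipEdge]
    · rintro x y z (rfl | rfl) h
      · exact h
      · rcases h with rfl | rfl
        · exact Or.inr rfl
        · left; rw [flipEdge_flipEdge]

/-- Edge-label variables: unordered edges of the quotient graph. -/
abbrev EdgeVar (G : PeriodicGraph d n) : Type := Quotient G.edgeSetoid

/-- The index type for the variables of the labeling space `ℂ^{V,E}`:
one potential variable `v_i` for each vertex `i` of the fundamental domain,
and one edge-label variable for each (undirected) edge of the quotient. -/
abbrev VarIdx (G : PeriodicGraph d n) : Type := Fin n ⊕ G.EdgeVar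

/-- The labeling space `ℂ^{V,E}`. -/
abbrev Labeling (G : PeriodicGraph d n) : Type := G.VarIdx → ℂ

/-- The edge variable attached to a directed edge. -/
def edgeVar (G : PeriodicGraph d n) (i j : Fin n) (a : Fin d → ℤ)
    (h : a ∈ G.edges i j) : G.VarIdx :=
  Sum.inr (Quotient.mk G.edgeSetoid ⟨(i, j, a), h⟩)

/-- The ring `ℂ[z^{±1}]` of complex Laurent polynomials in `z = (z_1,…,z_d)`. -/
abbrev LaurentC (d : ℕ) : Type := AddMonoidAlgebra ℂ (Fin d → ℤ)

/-- The universal coefficient ring `ℂ[v,e]`: polynomials in the potential and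
edge-label variables. -/
abbrev CoeffRing (G : PeriodicGraph d n) : Type := MvPolynomial G.VarIdx ℂ

/-- Laurent polynomials in `z` with coefficients in `ℂ[v,e]`. -/
abbrev LaurentU (G : PeriodicGraph d n) : Type :=
  AddMonoidAlgebra G.CoeffRing (Fin d → ℤ)

/-- The Floquet matrix `L(z)` at a fixed labeling `x ∈ ℂ^{V,E}`:
`L(z)_{i,j} = δ_{ij} v_i + ∑_{a : (i,j+a) ∈ ℰ} e_{(i,j),a} z^a`. -/
def floquet (G : PeriodicGraph d n) (x : G.Labeling) :
    Matrix (Fin n) (Fin n) (LaurentC d) := fun i j =>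
  (if i = j then AddMonoidAlgebra.single 0 (x (Sum.inl i)) else 0) +
    ∑ a ∈ (G.edges i j).attach,
      AddMonoidAlgebra.single a.1 (x (G.edgeVar i j a.1 a.2))

/-- The universal Floquet matrix `L(z)`, with the potentials and edge labels
treated as indeterminates. -/
def floquetU (G : PeriodicGraph d n) :
    Matrix (Fin n) (Fin n) G.LaurentU := fun i j =>
  (if i = j then AddMonoidAlgebra.single 0 (MvPolynomial.X (Sum.inl i)) else 0) +
    ∑ a ∈ (G.edges i j).attach,
      AddMonoidAlgebra.single a.1 (MvPolynomial.X (G.edgeVar i j a.1 a.2))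

/-- The matrix `L(z) - λ I` at a fixed labeling, as a matrix of polynomials in
`λ` over `ℂ[z^{±1}]`. -/
def dispMat (G : PeriodicGraph d n) (x : G.Labeling) :
    Matrix (Fin n) (Fin n) (Polynomial (LaurentC d)) := fun i j =>
  Polynomial.C (G.floquet x i j) - if i = j then Polynomial.X else 0

/-- The universal matrix `L(z) - λ I`. -/
def dispMatU (G : PeriodicGraph d n) :
    Matrix (Fin n) (Fin n) (Polynomial G.LaurentU) := fun i j =>
  Polynomial.C (G.floquetU i j) - if i = j then Polynomial.X else 0

/-- The dispersion polynomial `D(z,λ) = det (L(z) - λ I)` at a fixed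
labeling, an element of `ℂ[z^{±1}][λ]`. -/
def disp (G : PeriodicGraph d n) (x : G.Labeling) : Polynomial (LaurentC d) :=
  (G.dispMat x).det

/-- The universal dispersion polynomial `D(v,e,z,λ) = det (L(z) - λ I)`,
an element of `ℂ[v,e][z^{±1}][λ]`. -/
def dispU (G : PeriodicGraph d n) : Polynomial G.LaurentU :=
  G.dispMatU.det

/-- `σD(z,λ) = ∏ i, (L(z) - λI)_{i, σ(i)}` at a fixed labeling. -/
def permProd (G : PeriodicGraph d n) (x : G.Labeling) (σ : Equiv.Perm (Fin n)) :
    Polynomial (LaurentC d) :=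
  ∏ i, G.dispMat x i (σ i)

/-- The universal `σD(v,e,z,λ) = ∏ i, (L(z) - λI)_{i, σ(i)}`. -/
def permProdU (G : PeriodicGraph d n) (σ : Equiv.Perm (Fin n)) :
    Polynomial G.LaurentU :=
  ∏ i, G.dispMatU i (σ i)

/-- The support `𝒜(g) ⊆ ℤ^d × ℕ` of `g ∈ ℂ[z^{±1}][λ]`: the set of pairs
`(a, b)` such that the monomial `z^a λ^b` has nonzero coefficient. -/
def suppC (g : Polynomial (LaurentC d)) : Set ((Fin d → ℤ) × ℕ) :=
  {p | (g.coeff p.2).coeff p.1 ≠ 0}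

/-- The generic support `A(f) ⊆ ℤ^d × ℕ` of `f ∈ ℂ[v,e][z^{±1}][λ]`: the set
of `(a,b)` such that the coefficient `c_{a,b}(v,e)` of `z^a λ^b` is a nonzero
polynomial in `(v,e)` (equivalently, such that `(a,b)` is in the support of the
specialization of `f` at a generic labeling). -/
def genSupp {G : PeriodicGraph d n} (f : Polynomial G.LaurentU) :
    Set ((Fin d → ℤ) × ℕ) :=
  {p | (f.coeff p.2).coeff p.1 ≠ 0}

/-- The full support `𝒜(f) ⊆ ℤ^d × ℕ × ℕ^{V,E}` of `f ∈ ℂ[v,e][z^{±1}][λ]`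
as a polynomial in all the variables `z, λ, v, e`: the set of triples
`(r₁, r₂, r₃)` such that the monomial `z^{r₁} λ^{r₂} (v,e)^{r₃}` appears in `f`
with nonzero coefficient. -/
def fullSupp {G : PeriodicGraph d n} (f : Polynomial G.LaurentU) :
    Set ((Fin d → ℤ) × ℕ × (G.VarIdx →₀ ℕ)) :=
  {r | MvPolynomial.coeff r.2.2 ((f.coeff r.2.1).coeff r.1) ≠ 0}

/-- The embedding `ℤ^d × ℕ → ℝ^{d+1}` of exponent vectors. -/
def toPt (p : (Fin d → ℤ) × ℕ) : (Fin d → ℝ) × ℝ :=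
  (fun i => (p.1 i : ℝ), (p.2 : ℝ))

/-- The generic Newton polytope `N(f) ⊆ ℝ^{d+1}` of `f ∈ ℂ[v,e][z^{±1}][λ]`:
the convex hull of the generic support. -/
def newton {G : PeriodicGraph d n} (f : Polynomial G.LaurentU) :
    Set ((Fin d → ℝ) × ℝ) :=
  convexHull ℝ (toPt '' genSupp f)

/-- The pairing `w · p` of a weight `w ∈ ℤ^{d+1}` with an exponent vector
`p ∈ ℤ^d × ℕ`. -/
def dotZ (w : (Fin d → ℤ) × ℤ) (p : (Fin d → ℤ) × ℕ) : ℤ :=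
  (∑ i, w.1 i * p.1 i) + w.2 * (p.2 : ℤ)

/-- The pairing `w · q` of a weight `w ∈ ℤ^{d+1}` with a point `q ∈ ℝ^{d+1}`. -/
def dotR (w : (Fin d → ℤ) × ℤ) (q : (Fin d → ℝ) × ℝ) : ℝ :=
  (∑ i, (w.1 i : ℝ) * q.1 i) + (w.2 : ℝ) * q.2

/-- The face `N(f)_w` of the generic Newton polytope identified by the weight
`w`: the set of points of `N(f)` on which `w · ·` is minimized. -/
def face {G : PeriodicGraph d n} (f : Polynomial G.LaurentU)
    (w : (Fin d → ℤ) × ℤ) : Set ((Fin d → ℝ) × ℝ) :=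
  {q ∈ newton f | ∀ q' ∈ newton f, dotR w q ≤ dotR w q'}

/-- A set in `ℝ^{d+1}` is vertical if it contains two points `(a,b)` and
`(a,c)` with `b ≠ c`. -/
def IsVertical (F : Set ((Fin d → ℝ) × ℝ)) : Prop :=
  ∃ (a : Fin d → ℝ) (b c : ℝ), b ≠ c ∧ (a, b) ∈ F ∧ (a, c) ∈ F

/-- A set in `ℝ^{d+1}` is a vertical segment if it is a (one-dimensional)
segment and is vertical. -/
def IsVerticalSegment (F : Set ((Fin d → ℝ) × ℝ)) : Prop :=
  (∃ p q : (Fin d → ℝ) × ℝ, p ≠ q ∧ F = segment ℝ p q) ∧ IsVertical F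

/-- `U ⊆ [n]` is a component of the fundamental domain: no edge of `Γ` joins
the `ℤ^d`-orbit of `U` to the `ℤ^d`-orbit of its complement. -/
def IsComponent (G : PeriodicGraph d n) (U : Set (Fin n)) : Prop :=
  ∀ i ∈ U, ∀ j, j ∉ U → G.edges i j = ∅

/-- A fundamental domain of `Γ` is determined by shifts `t i ∈ ℤ^d` of the
vertices of the standard fundamental domain (it is `{(i, t i) : i ∈ [n]}`).
`SupportZeroOn G t U` says that the subset `{(i, t i) : i ∈ U}` of that
fundamental domain has support `0`: every edge between the orbits of vertices
of `U` joins `(i, t i)` to `(j, t j)` with shift `a = 0`. -/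
def SupportZeroOn (G : PeriodicGraph d n) (t : Fin n → (Fin d → ℤ))
    (U : Set (Fin n)) : Prop :=
  ∀ i ∈ U, ∀ j ∈ U, ∀ a ∈ G.edges i j, a = t j - t i

/-- `Γ` has a fundamental domain of support `0`. -/
def HasSupportZeroFD (G : PeriodicGraph d n) : Prop :=
  ∃ t : Fin n → (Fin d → ℤ), G.SupportZeroOn t Set.univ

/-- `Γ` has a fundamental domain with a nonempty component of support `0`. -/
def HasSupportZeroComponent (G : PeriodicGraph d n) : Prop :=
  ∃ (t : Fin n → (Fin d → ℤ)) (U : Set (Fin n)),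
    U.Nonempty ∧ G.IsComponent U ∧ G.SupportZeroOn t U

/-- A subset of the labeling space `ℂ^{V,E}` is algebraic if it is the common
zero locus of a family of polynomials in the variables `(v,e)`. -/
def IsAlgebraicSet {ι : Type*} (S : Set (ι → ℂ)) : Prop :=
  ∃ P : Set (MvPolynomial ι ℂ), S = {x | ∀ p ∈ P, MvPolynomial.eval x p = 0}

/-- A property of labelings holds generically if it holds outside some proper
algebraic subset of the labeling space (i.e., on a nonempty Zariski-open set). -/
def Generic {ι : Type*} (P : (ι → ℂ) → Prop) : Prop :=
  ∃ S : Set (ι → ℂ), IsAlgebraicSet S ∧ S ≠ Set.univ ∧ ∀ x ∉ S, P x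

/-- `g ∈ ℂ[z^{±1}][λ]` has a linear factor in `λ`. -/
def HasLinearFactor (g : Polynomial (LaurentC d)) : Prop :=
  ∃ lam : ℂ, (Polynomial.X - Polynomial.C (algebraMap ℂ (LaurentC d) lam)) ∣ g



/-- The dispersion polynomial `D|_U(z,λ) = det (L|_U(z) - λI)` of the induced
periodic operator on the induced subgraph `Γ_U`, for `U ⊆ [n]`, at a fixed
labeling (the Floquet matrix of the induced operator is the corresponding
principal submatrix of `L(z)`). -/
def dispSub (G : PeriodicGraph d n) (x : G.Labeling) (U : Finset (Fin n)) :
    Polynomial (LaurentC d) :=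
  (Matrix.det (fun i j : {i // i ∈ U} =>
    Polynomial.C (G.floquet x i.1 j.1) - if i = j then Polynomial.X else 0))

/-- Restriction of a Laurent polynomial to the monomials satisfying a
predicate. -/
def laurFilter (p : (Fin d → ℤ) → Prop) (g : LaurentC d) : LaurentC d :=
  AddMonoidAlgebra.ofCoeff (show (Fin d → ℤ) →₀ ℂ from Finsupp.filter p (g.coeff : (Fin d → ℤ) →₀ ℂ))

/-- The facial polynomial `g_w` of `g ∈ ℂ[z^{±1}][λ]`: the sum of the terms of
`g` whose exponent vectors minimize `w · ·` over the support of `g`. -/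
def facialC (w : (Fin d → ℤ) × ℤ) (g : Polynomial (LaurentC d)) :
    Polynomial (LaurentC d) :=
  ∑ b ∈ g.support,
    Polynomial.C (laurFilter
      (fun a => ∀ q ∈ suppC g, dotZ w (a, b) ≤ dotZ w q) (g.coeff b)) *
      Polynomial.X ^ b

/-- The monomial `z^a` in `ℂ[z^{±1}]`. -/
def zMon (a : Fin d → ℤ) : LaurentC d := AddMonoidAlgebra.single a 1

/-- The Sylvester matrix of two polynomials `f, g ∈ R[λ]` (with respect to
their natural degrees `s = deg f` and `t = deg g`): a `(t+s) × (t+s)` matrix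
whose first `t` rows are the shifted coefficient sequences of `f` and whose
last `s` rows are the shifted coefficient sequences of `g`. -/
def sylvester {R : Type*} [CommRing R] (f g : Polynomial R) :
    Matrix (Fin (g.natDegree + f.natDegree)) (Fin (g.natDegree + f.natDegree)) R :=
  fun r c =>
    if (r : ℕ) < g.natDegree then
      (if (r : ℕ) ≤ (c : ℕ) then f.coeff ((c : ℕ) - (r : ℕ)) else 0)
    else
      (if ((r : ℕ) - g.natDegree) ≤ (c : ℕ) then
        g.coeff ((c : ℕ) - ((r : ℕ) - g.natDegree)) else 0)

/-- The resultant of two polynomials in `λ`: the determinant of their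
Sylvester matrix. -/
def resultant {R : Type*} [CommRing R] (f g : Polynomial R) : R :=
  (sylvester f g).det

/-- The simplified quotient graph `S(Γ/ℤ^d)`: the finite simple graph on the
fundamental domain `[n]` with an edge between `i ≠ j` whenever some edge of `Γ`
joins the orbits of `i` and `j`. -/
def simpleQuotient (G : PeriodicGraph d n) : SimpleGraph (Fin n) where
  Adj i j := i ≠ j ∧ (G.edges i j).Nonempty
  symm := ⟨by
    rintro i j ⟨hij, a, ha⟩
    exact ⟨hij.symm, ⟨-a, (G.symm i j a).mp ha⟩⟩⟩
  loopless := ⟨fun i h => h.1 rfl⟩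

/-- A property of potentials `(v_1,…,v_n) ∈ ℂ^n` holds generically if it holds
outside a proper algebraic subset of `ℂ^n`. -/
def GenericPot (P : (Fin n → ℂ) → Prop) : Prop :=
  ∃ S : Set (Fin n → ℂ), IsAlgebraicSet S ∧ S ≠ Set.univ ∧ ∀ x ∉ S, P x

end PeriodicGraph

/-!
If the generic Newton polytope is a vertical segment, it contains the point `(0, n)` of the
leading term `(-1)^n λ^n`, so no power of `z` occurs in `D(z, λ)`: the characteristic polynomial
of `L(z)` has constant coefficients. At the all-ones labeling and at `z = (t^{w_1}, …, t^{w_d})`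
with `|t| = 1`, `L(z)` is Hermitian, so `tr L(z)^m`, a function of its eigenvalues, does not
depend on `t`. But `tr L(z)^m` has nonnegative coefficients, and a closed walk of length `m` from
`(i, 0)` to `(i, s)` makes its coefficient of `z^s` positive; for `w = s` this gives `t^{s·s}` a
positive coefficient with `s·s > 0` unless `s = 0`. So closed walks have zero displacement, and
translating every vertex along a walk from a fixed vertex of its component yields a fundamental
domain of support `0`.
-/

open Polynomial AddMonoidAlgebra

namespace Matrix.IsHermitian

variable {𝕜 : Type*} [RCLike 𝕜] {ι : Type*} [Fintype ι] [DecidableEq ι] {A B : Matrix ι ι 𝕜}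

lemma trace_pow_eq_sum_eigenvalues_pow (hA : A.IsHermitian) (m : ℕ) :
    (A ^ m).trace = ∑ i, (hA.eigenvalues i : 𝕜) ^ m := by
  conv_lhs => rw [hA.spectral_theorem, ← map_pow, Unitary.conjStarAlgAut_apply, trace_mul_cycle,
    Unitary.coe_star_mul_self, one_mul, diagonal_pow, trace_diagonal]
  rfl

lemma trace_pow_eq_of_charpoly_eq (hA : A.IsHermitian) (hB : B.IsHermitian)
    (h : A.charpoly = B.charpoly) (m : ℕ) : (A ^ m).trace = (B ^ m).trace := by
  rw [hA.trace_pow_eq_sum_eigenvalues_pow, hB.trace_pow_eq_sum_eigenvalues_pow,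
    (hA.eigenvalues_eq_eigenvalues_iff hB).mpr h]

end Matrix.IsHermitian

lemma Matrix.det_C_sub_X_eq_neg_one_pow_mul_charpoly {R ι : Type*} [CommRing R] [Fintype ι]
    [DecidableEq ι] (M : Matrix ι ι R) :
    Matrix.det (fun i j => C (M i j) - if i = j then (X : R[X]) else 0) =
      (-1) ^ Fintype.card ι * M.charpoly := by
  have h : (fun i j => C (M i j) - if i = j then (X : R[X]) else 0) = -M.charmatrix := by
    ext i j
    simp [Matrix.charmatrix_apply, Matrix.diagonal_apply]
  rw [h, Matrix.det_neg, Matrix.charpoly]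

lemma Complex.sphere_infinite (x : ℂ) {r : ℝ} (hr : 0 < r) : (Metric.sphere x r).Infinite :=
  (isPreconnected_sphere (by simp [Complex.rank_real_complex]) x r).infinite_of_nontrivial
    ⟨x + r, by simp [hr.le], x - r, by simp [hr.le], fun h => by
      have : (r : ℂ) = -r := add_left_cancel (h.trans (sub_eq_add_neg x r))
      exact hr.ne' (by exact_mod_cast CharZero.eq_neg_self_iff.mp this)⟩

lemma Complex.setOf_units_norm_eq_one_infinite : {t : ℂˣ | ‖(t : ℂ)‖ = 1}.Infinite :=
  Set.Infinite.of_image Units.val <| (Complex.sphere_infinite 0 one_pos).mono fun z hz =>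
    have hz : ‖z‖ = 1 := mem_sphere_zero_iff_norm.mp hz
    ⟨Units.mk0 z (norm_ne_zero_iff.mp (by rw [hz]; exact one_ne_zero)), hz, rfl⟩

namespace LaurentPolynomial

variable {K : Type*} [CommRing K] [IsDomain K] {f : K[T;T⁻¹]} {S : Set Kˣ}

lemma eq_zero_of_forall_eval₂_eq_zero (hS : S.Infinite)
    (h : ∀ t ∈ S, eval₂ (RingHom.id K) t f = 0) : f = 0 := by
  obtain ⟨k, p, hp⟩ := f.exists_T_pow
  suffices p = 0 by
    rw [this, map_zero, eq_comm] at hp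
    exact (isUnit_T (k : ℤ)).mul_left_eq_zero.mp hp
  refine p.eq_zero_of_infinite_isRoot ((hS.image Units.val_injective.injOn).mono ?_)
  rintro _ ⟨t, ht, rfl⟩
  have := congrArg (eval₂ (RingHom.id K) t) hp
  rwa [eval₂_toLaurent, map_mul, h t ht, zero_mul, eval₂_id] at this

lemma eq_C_of_forall_eval₂_eq (hS : S.Infinite) {c : K}
    (h : ∀ t ∈ S, eval₂ (RingHom.id K) t f = c) : f = C c :=
  sub_eq_zero.mp <| eq_zero_of_forall_eval₂_eq_zero hS fun t ht => by
    rw [map_sub, h t ht, eval₂_C, RingHom.id_apply, sub_self]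

end LaurentPolynomial

namespace AddMonoidAlgebra

variable {R M N : Type*} [Semiring R]

lemma eq_single_zero_of_coeff_eq_zero [Zero M] {x : AddMonoidAlgebra R M}
    (hx : ∀ a, a ≠ 0 → x.coeff a = 0) : x = single 0 (x.coeff 0) := by
  ext a
  by_cases ha : a = 0
  · simp [ha]
  · simp [hx a ha, Ne.symm ha]

variable [Subsingleton (AddUnits R)]

lemma coeff_mul_add_ne_zero [NoZeroDivisors R] [Add M] {f g : AddMonoidAlgebra R M} {a b : M}
    (ha : f.coeff a ≠ 0) (hb : g.coeff b ≠ 0) : (f * g).coeff (a + b) ≠ 0 := by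
  classical
  rw [coeff_mul]
  intro h
  have h₁ := Finset.sum_eq_zero_iff.mp h a (Finsupp.mem_support_iff.mpr ha)
  have h₂ := Finset.sum_eq_zero_iff.mp h₁ b (Finsupp.mem_support_iff.mpr hb)
  exact mul_ne_zero ha hb (by simpa using h₂)

lemma coeff_mapDomain_ne_zero (f : M → N) {x : AddMonoidAlgebra R M} {a : M}
    (ha : x.coeff a ≠ 0) : (mapDomain f x).coeff (f a) ≠ 0 := by
  classical
  rw [coeff_mapDomain, Finsupp.mapDomain_apply_eq_sum]
  exact fun h => ha (Finset.sum_eq_zero_iff.mp h a (by simpa using ha))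

end AddMonoidAlgebra

lemma Polynomial.map_eq_map_of_coeff_coeff_eq_zero {R S M : Type*} [Semiring R] [Semiring S]
    [AddMonoid M] {p : (AddMonoidAlgebra R M)[X]}
    (hp : ∀ b a, a ≠ 0 → (p.coeff b).coeff a = 0) {φ ψ : AddMonoidAlgebra R M →+* S}
    (h : ∀ r, φ (single 0 r) = ψ (single 0 r)) : p.map φ = p.map ψ := by
  ext b
  rw [coeff_map, coeff_map, eq_single_zero_of_coeff_eq_zero (hp b), h]

namespace PeriodicGraph

variable {d n : ℕ} (G : PeriodicGraph d n)

lemma IsVerticalSegment.fst_eq {F : Set ((Fin d → ℝ) × ℝ)} (hF : IsVerticalSegment F)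
    {p q : (Fin d → ℝ) × ℝ} (hp : p ∈ F) (hq : q ∈ F) : p.1 = q.1 := by
  obtain ⟨⟨P, Q, -, rfl⟩, a, b, c, hbc, hb, hc⟩ := hF
  rw [segment_eq_image_lineMap] at hb hc hp hq
  have fst_lineMap (θ : ℝ) : (AffineMap.lineMap P Q θ).1 = AffineMap.lineMap P.1 Q.1 θ := by
    simp [AffineMap.lineMap_apply_module]
  have hPQ : P.1 = Q.1 := by
    by_contra hPQ
    obtain ⟨θ, -, hθ⟩ := hb
    obtain ⟨θ', -, hθ'⟩ := hc
    have : θ = θ' := AffineMap.lineMap_injective ℝ hPQ <| by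
      rw [← fst_lineMap, ← fst_lineMap, hθ, hθ']
    subst this
    exact hbc (Prod.ext_iff.mp (hθ.symm.trans hθ')).2
  obtain ⟨θ, -, rfl⟩ := hp
  obtain ⟨θ', -, rfl⟩ := hq
  rw [fst_lineMap, fst_lineMap, hPQ, AffineMap.lineMap_same_apply, AffineMap.lineMap_same_apply]

lemma adj_translate {u v : Vertex d n} (c : Fin d → ℤ) (h : G.Adj u v) :
    G.Adj (u.1, u.2 + c) (v.1, v.2 + c) := by
  simpa [Adj] using h

lemma adj_symm {u v : Vertex d n} (h : G.Adj u v) : G.Adj v u := by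
  simpa [Adj] using (G.symm u.1 v.1 (v.2 - u.2)).mp h

instance : Std.Symm G.Adj := ⟨fun _ _ => G.adj_symm⟩

lemma reflTransGen_translate {u v : Vertex d n} (c : Fin d → ℤ)
    (h : Relation.ReflTransGen G.Adj u v) :
    Relation.ReflTransGen G.Adj (u.1, u.2 + c) (v.1, v.2 + c) :=
  Relation.ReflTransGen.lift (fun w : Vertex d n => (w.1, w.2 + c))
    (fun _ _ => G.adj_translate c) _ _ h

def componentSetoid : Setoid (Fin n) where
  r i j := ∃ b, Relation.ReflTransGen G.Adj (i, 0) (j, b)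
  iseqv := by
    refine ⟨fun i => ⟨0, .refl⟩, fun ⟨b, h⟩ => ⟨-b, ?_⟩, fun ⟨b, h⟩ ⟨c, h'⟩ => ⟨c + b, ?_⟩⟩
    · simpa using G.reflTransGen_translate (-b) (Std.Symm.symm _ _ h)
    · exact h.trans (by simpa using G.reflTransGen_translate b h')

lemma hasSupportZeroFD_of_closed_walks
    (h : ∀ i s, Relation.ReflTransGen G.Adj (i, 0) (i, s) → s = 0) : G.HasSupportZeroFD := by
  have hrep (i : Fin n) := Quotient.mk_out (s := G.componentSetoid) i
  choose t ht using hrep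
  refine ⟨t, fun i _ j _ a ha => ?_⟩
  have hij : (⟦i⟧ : Quotient G.componentSetoid) = ⟦j⟧ :=
    Quotient.sound ⟨a, .single (by simpa [Adj] using ha)⟩
  have hwalk : Relation.ReflTransGen G.Adj (j, t j) (j, t i + a) := by
    refine (Std.Symm.symm _ _ (ht j)).trans ?_
    rw [← hij]
    exact (ht i).tail (by simpa [Adj] using ha)
  have := h j _ (by simpa using G.reflTransGen_translate (-t j) hwalk)
  rw [eq_sub_iff_add_eq, ← sub_eq_zero, ← this]
  abel

lemma dispU_eq : G.dispU = (-1) ^ n * G.floquetU.charpoly :=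
  (Matrix.det_C_sub_X_eq_neg_one_pow_mul_charpoly G.floquetU).trans (by rw [Fintype.card_fin])

lemma coeff_coeff_dispU_leading : ((G.dispU.coeff n).coeff 0) = (-1) ^ n := by
  have hlead : G.floquetU.charpoly.coeff n = 1 := by
    simpa using G.floquetU.charpoly_monic.coeff_natDegree
  rw [G.dispU_eq, ← C_1, ← C_neg, ← C_pow, coeff_C_mul, hlead, mul_one, one_def, ← single_neg,
    single_pow, nsmul_zero]
  simp

lemma coeff_coeff_dispU_eq_zero (hvs : IsVerticalSegment (newton G.dispU)) (b : ℕ)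
    {a : Fin d → ℤ} (ha : a ≠ 0) : (G.dispU.coeff b).coeff a = 0 := by
  by_contra h
  have mem (p) (hp : p ∈ genSupp G.dispU) : toPt p ∈ newton G.dispU :=
    subset_convexHull ℝ _ ⟨p, hp, rfl⟩
  have hn : ((0 : Fin d → ℤ), n) ∈ genSupp G.dispU := by
    simp [genSupp, coeff_coeff_dispU_leading]
  have := hvs.fst_eq (mem (a, b) h) (mem _ hn)
  exact ha (funext fun k => by simpa [toPt] using congrFun this k)

lemma coeff_coeff_charpoly_floquet_one_eq_zero (hvs : IsVerticalSegment (newton G.dispU))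
    (b : ℕ) {a : Fin d → ℤ} (ha : a ≠ 0) : (((G.floquet 1).charpoly.coeff b).coeff a) = 0 := by
  have hL : G.floquet 1 = G.floquetU.map (mapRingHom _ (MvPolynomial.eval 1)) := by
    ext1 i j
    simp [floquet, floquetU, apply_ite]
  have hU : G.floquetU.charpoly = (-1) ^ n * G.dispU := by
    rw [dispU_eq, ← mul_assoc, ← mul_pow, neg_one_mul, neg_neg, one_pow, one_mul]
  rw [hL, Matrix.charpoly_map, Polynomial.coeff_map, coeff_mapRingHom, hU]
  rcases n.even_or_odd with h | h <;>
    simp [h.neg_one_pow, G.coeff_coeff_dispU_eq_zero hvs b ha]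

-- Natural-number coefficients: those of its powers count walks, so they cannot cancel.
def walkMatrix : Matrix (Fin n) (Fin n) (AddMonoidAlgebra ℕ (Fin d → ℤ)) := fun i j =>
  (if i = j then 1 else 0) + ∑ a ∈ G.edges i j, single a 1

lemma floquet_one :
    G.floquet 1 = G.walkMatrix.map (mapRingHom (Fin d → ℤ) (Nat.castRingHom ℂ)) := by
  ext1 i j
  simp only [floquet, walkMatrix, Matrix.map_apply, map_add, map_sum, apply_ite, map_one,
    map_zero, mapRingHom_single, Pi.one_apply, one_def]
  rw [← Finset.sum_attach (G.edges i j)]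

lemma walkMatrix_apply_swap (i j : Fin n) :
    G.walkMatrix j i = mapDomainRingHom ℕ negAddMonoidHom (G.walkMatrix i j) := by
  simp only [walkMatrix, map_add, map_sum, apply_ite, map_one, map_zero, mapDomainRingHom_apply,
    mapDomain_single, negAddMonoidHom_apply, eq_comm (a := j)]
  congr 1
  exact Finset.sum_nbij' (fun a => -a) (fun a => -a) (fun a ha => (G.symm j i a).mp ha)
    (fun a ha => by simpa using (G.symm i j a).mp ha) (by simp) (by simp) (by simp)

lemma coeff_walkMatrix_ne_zero {i j : Fin n} {a : Fin d → ℤ} (ha : a ∈ G.edges i j) :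
    (G.walkMatrix i j).coeff a ≠ 0 := by
  intro h
  simp only [walkMatrix, AddMonoidAlgebra.coeff_add, AddMonoidAlgebra.coeff_sum, Finsupp.add_apply,
    Finsupp.finsetSum_apply, Nat.add_eq_zero_iff, Finset.sum_eq_zero_iff] at h
  simpa using h.2 a ha

lemma coeff_walkMatrix_pow_ne_zero {u v : Vertex d n} (h : Relation.ReflTransGen G.Adj u v) :
    ∃ m, ((G.walkMatrix ^ m) u.1 v.1).coeff (v.2 - u.2) ≠ 0 := by
  induction h with
  | refl => exact ⟨0, by simp [one_def]⟩
  | @tail w v _ hwv ih =>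
    obtain ⟨m, hm⟩ := ih
    refine ⟨m + 1, ?_⟩
    rw [pow_succ, Matrix.mul_apply, AddMonoidAlgebra.coeff_sum, Finsupp.finsetSum_apply, Ne,
      Finset.sum_eq_zero_iff, not_forall]
    refine ⟨w.1, fun h => coeff_mul_add_ne_zero hm (G.coeff_walkMatrix_ne_zero hwv) ?_⟩
    simpa using h (Finset.mem_univ _)

lemma coeff_trace_walkMatrix_pow_ne_zero {i : Fin n} {s : Fin d → ℤ}
    (h : Relation.ReflTransGen G.Adj (i, 0) (i, s)) :
    ∃ m, ((G.walkMatrix ^ m).trace).coeff s ≠ 0 := by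
  obtain ⟨m, hm⟩ := G.coeff_walkMatrix_pow_ne_zero h
  refine ⟨m, ?_⟩
  rw [Matrix.trace, AddMonoidAlgebra.coeff_sum, Finsupp.finsetSum_apply, Ne,
    Finset.sum_eq_zero_iff, not_forall]
  exact ⟨i, by simpa using hm⟩

/-- Evaluation of a Laurent polynomial at `z = (t ^ w₁, …, t ^ w_d)`. -/
def evalPow (w : Fin d → ℤ) (t : ℂˣ) : LaurentC d →+* ℂ :=
  (LaurentPolynomial.eval₂ (RingHom.id ℂ) t).comp
    (mapDomainRingHom ℂ (dotProductBilin ℤ ℤ w).toAddMonoidHom)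

lemma evalPow_single (w : Fin d → ℤ) (t : ℂˣ) (a : Fin d → ℤ) (c : ℂ) :
    evalPow w t (single a c) = c * (t : ℂ) ^ (w ⬝ᵥ a) := by
  simp [evalPow, LaurentPolynomial.single_eq_C_mul_T]

section evalPow

local notation "ν" => mapRingHom (Fin d → ℤ) (Nat.castRingHom ℂ)

lemma evalPow_comp_mapDomain_neg (w : Fin d → ℤ) {t : ℂˣ} (ht : ‖(t : ℂ)‖ = 1) :
    ((evalPow w t).comp ν).comp (mapDomainRingHom ℕ negAddMonoidHom) =
      (starRingEnd ℂ).comp ((evalPow w t).comp ν) := by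
  refine ringHom_ext (fun r => by simp [evalPow_single]) fun a => ?_
  simp [evalPow_single, ← Complex.inv_eq_conj ht]

lemma isHermitian_map_walkMatrix (w : Fin d → ℤ) {t : ℂˣ} (ht : ‖(t : ℂ)‖ = 1) :
    (G.walkMatrix.map ((evalPow w t).comp ν)).IsHermitian := by
  refine Matrix.IsHermitian.ext fun i j => ?_
  rw [Matrix.map_apply, Matrix.map_apply, walkMatrix_apply_swap, ← RingHom.comp_apply,
    evalPow_comp_mapDomain_neg w ht]
  simp

lemma evalPow_trace_walkMatrix_pow (hvs : IsVerticalSegment (newton G.dispU)) (w : Fin d → ℤ)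
    {t : ℂˣ} (ht : ‖(t : ℂ)‖ = 1) (m : ℕ) :
    evalPow w t (ν (G.walkMatrix ^ m).trace) = evalPow w 1 (ν (G.walkMatrix ^ m).trace) := by
  have trace_eq (s : ℂˣ) : evalPow w s (ν (G.walkMatrix ^ m).trace) =
      ((G.walkMatrix.map ((evalPow w s).comp ν)) ^ m).trace := by
    rw [← RingHom.comp_apply, AddMonoidHom.map_trace, Matrix.map_pow]
  have charpoly_eq (s : ℂˣ) : (G.walkMatrix.map ((evalPow w s).comp ν)).charpoly =
      (G.floquet 1).charpoly.map (evalPow w s) := by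
    rw [RingHom.coe_comp, ← Matrix.map_map, ← floquet_one, Matrix.charpoly_map]
  rw [trace_eq, trace_eq]
  refine (G.isHermitian_map_walkMatrix w ht).trace_pow_eq_of_charpoly_eq
    (G.isHermitian_map_walkMatrix w (by simp)) ?_ m
  rw [charpoly_eq, charpoly_eq]
  exact map_eq_map_of_coeff_coeff_eq_zero (G.coeff_coeff_charpoly_floquet_one_eq_zero hvs)
    (by simp [evalPow_single])

lemma coeff_eq_zero_of_evalPow_eq {g : AddMonoidAlgebra ℕ (Fin d → ℤ)} {w a : Fin d → ℤ}
    (h : ∀ t : ℂˣ, ‖(t : ℂ)‖ = 1 → evalPow w t (ν g) = evalPow w 1 (ν g))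
    (ha : w ⬝ᵥ a ≠ 0) : g.coeff a = 0 := by
  set π := (dotProductBilin ℤ ℤ w).toAddMonoidHom
  have hP : mapRingHom ℤ (Nat.castRingHom ℂ) (mapDomainRingHom ℕ π g) =
      LaurentPolynomial.C (evalPow w 1 (ν g)) :=
    LaurentPolynomial.eq_C_of_forall_eval₂_eq Complex.setOf_units_norm_eq_one_infinite
      fun t ht => by
        have := RingHom.congr_fun (mapRingHom_comp_mapDomainRingHom (Nat.castRingHom ℂ) π) g
        rw [RingHom.comp_apply, RingHom.comp_apply] at this
        rw [← h t ht, this]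
        rfl
  by_contra hg
  have hπa : π a ≠ 0 := by simpa [π] using ha
  have hcoeff := congrArg (fun p => p.coeff (π a)) hP
  rw [← LaurentPolynomial.single_eq_C, coeff_single, Finsupp.single_eq_of_ne hπa,
    coeff_mapRingHom, mapDomainRingHom_apply, map_eq_zero_iff _ Nat.cast_injective] at hcoeff
  exact coeff_mapDomain_ne_zero π hg hcoeff

end evalPow

lemma eq_zero_of_reflTransGen (hvs : IsVerticalSegment (newton G.dispU)) {i : Fin n}
    {s : Fin d → ℤ} (h : Relation.ReflTransGen G.Adj (i, 0) (i, s)) : s = 0 := by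
  by_contra hs
  obtain ⟨m, hm⟩ := G.coeff_trace_walkMatrix_pow_ne_zero h
  exact hm <| coeff_eq_zero_of_evalPow_eq
    (fun t ht => G.evalPow_trace_walkMatrix_pow hvs s ht m)
    (fun h0 => hs (dotProduct_self_eq_zero.mp h0))

end PeriodicGraph

open PeriodicGraph in
theorem supportZero_extension_general {d n : ℕ} (G : PeriodicGraph d n)
    (hvs : IsVerticalSegment (newton G.dispU)) :
    G.HasSupportZeroFD :=
  G.hasSupportZeroFD_of_closed_walks fun _ _ => G.eq_zero_of_reflTransGen hvs

open PeriodicGraph in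
/-- Suppose the generic Newton polytope of `Γ` is a vertical
segment. If some `U ⊆ W` with `|U| = |W| - 1` is a fundamental domain of
support `0` of the induced periodic graph `Γ_U`, then `Γ` itself has a
fundamental domain of support `0`. -/
theorem supportZero_extension {d n : ℕ} (G : PeriodicGraph d n)
    (hvs : IsVerticalSegment (newton G.dispU))
    (U : Finset (Fin n)) (hcard : U.card = n - 1)
    (hU : G.SupportZeroOn 0 ↑U) :
    G.HasSupportZeroFD :=
  supportZero_extension_general G hvs
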